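/- On a pseudo-Riemannian manifold of dimension n, the generalized Einstein (Lovelock) tensor (E^{(k)})_i^j := (1/k!) δ^{j j₁…j_{2k}}_{i i₁…i_{2k}} R_{j₁j₂}{}^{i₁i₂} ⋯ R_{j_{2k-1}j_{2k}}{}^{i_{2k-1}i_{2k}} is symmetric (after lowering an index) and divergence-free: ∇^j E^{(k)}_{ij} = 0. Moreover its trace equals (n−2k) Pf^{(k)}(Rm), where Pf^{(k)}(Rm) := (1/k!) δ^{j₁…j_{2k}}_{i₁…i_{2k}} R_{j₁j₂}{}^{i₁i₂} ⋯ R_{j_{2k-1}j_{2k}}{}^{i_{2k-1}i_{2k}}. -/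

import Mathlib

open scoped BigOperators

noncomputable def kron {n : ℕ} (i j : Fin n) : ℝ := if i = j then 1 else 0

noncomputable def gdelta {n m : ℕ} (j i : Fin m → Fin n) : ℝ :=
  Matrix.det (Matrix.of fun a b => kron (j a) (i b))

def d0 {k : ℕ} (a : Fin k) : Fin (2 * k) := ⟨2 * a.val, by have := a.isLt; omega⟩
def d1 {k : ℕ} (a : Fin k) : Fin (2 * k) := ⟨2 * a.val + 1, by have := a.isLt; omega⟩

/-- The generalized Einstein (Lovelock) tensor
`(E^{(k)})_i^j = (1/k!) δ^{j j₁…j_{2k}}_{i i₁…i_{2k}} R_{j₁j₂}{}^{i₁i₂} ⋯ R_{j_{2k-1}j_{2k}}{}^{i_{2k-1}i_{2k}}`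
(orthonormal frame, so index placement is trivial). -/
noncomputable def lovelock {n k : ℕ} (R : Fin n → Fin n → Fin n → Fin n → ℝ)
    (i j : Fin n) : ℝ :=
  (1 / (Nat.factorial k : ℝ)) *
    ∑ js : Fin (2 * k) → Fin n, ∑ is : Fin (2 * k) → Fin n,
      gdelta (Fin.cons j js) (Fin.cons i is) *
        ∏ a : Fin k, R (js (d0 a)) (js (d1 a)) (is (d0 a)) (is (d1 a))

/-- The covariant derivative `∇_a (E^{(k)})_i^j`, computed from `DR = ∇R` by the
Leibniz rule (the generalized Kronecker delta being parallel). -/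
noncomputable def Dlovelock {n k : ℕ} (R : Fin n → Fin n → Fin n → Fin n → ℝ)
    (DR : Fin n → Fin n → Fin n → Fin n → Fin n → ℝ) (a : Fin n) (i j : Fin n) : ℝ :=
  (1 / (Nat.factorial k : ℝ)) *
    ∑ js : Fin (2 * k) → Fin n, ∑ is : Fin (2 * k) → Fin n,
      gdelta (Fin.cons j js) (Fin.cons i is) *
        ∑ w : Fin k, DR a (js (d0 w)) (js (d1 w)) (is (d0 w)) (is (d1 w)) *
          ∏ b ∈ Finset.univ.erase w, R (js (d0 b)) (js (d1 b)) (is (d0 b)) (is (d1 b))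

/-- `Pf^{(k)}(Rm) = (1/k!) δ^{j₁…j_{2k}}_{i₁…i_{2k}} R_{j₁j₂}{}^{i₁i₂} ⋯`. -/
noncomputable def PfA {n k : ℕ} (A : Fin n → Fin n → Fin n → Fin n → ℝ) : ℝ :=
  (1 / (Nat.factorial k : ℝ)) *
    ∑ js : Fin (2 * k) → Fin n, ∑ is : Fin (2 * k) → Fin n,
      gdelta js is * ∏ a : Fin k, A (js (d0 a)) (js (d1 a)) (is (d0 a)) (is (d1 a))

/-!
The generalized Kronecker delta `δ^J_I = det (δ^{j_a}_{i_b})` is symmetric under exchanging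
its two index rows and alternating in each of them. Symmetry of `E^{(k)}` is then the pair
symmetry `R_{abcd} = R_{cdab}`. Laplace expansion along the first row gives the contraction
`∑ₓ δ^{x J}_{x I} = (n - m) δ^J_I` for `|I| = |J| = m`: the diagonal entry contributes `n`,
and each of the other `m` terms contributes `-1` once the columns are put back in order by a
cycle. This gives the trace. In the divergence, `∇_j` sits in the alternating upper row next to
the two upper indices of one curvature factor; the even 3-cycle of these positions shows that
the sum is unchanged under cyclic rotation of the three indices of `∇_j R_{j₁ j₂ ⋯}`, so it is
a third of the cyclic sum, which vanishes by the second Bianchi identity.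
-/

open Finset

lemma sum_comp_perm {ι α M : Type*} [Fintype ι] [DecidableEq ι] [Fintype α] [AddCommMonoid M]
    (σ : Equiv.Perm ι) (g : (ι → α) → M) : ∑ f, g (f ∘ σ) = ∑ f, g f :=
  (Equiv.arrowCongr σ.symm (Equiv.refl α)).sum_comp g

lemma sum_fun_fin_succ {α M : Type*} [Fintype α] [AddCommMonoid M] {m : ℕ}
    (g : (Fin (m + 1) → α) → M) : ∑ f, g f = ∑ x, ∑ t : Fin m → α, g (Fin.cons x t) :=
  ((Fin.consEquiv fun _ => α).sum_comp g).symm.trans (Fintype.sum_prod_type _)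

section GeneralizedKronecker

variable {n m : ℕ}

lemma kron_comm (i j : Fin n) : kron i j = kron j i := by
  simp only [kron, eq_comm]

lemma sum_kron_mul (j : Fin n) (D : Fin n → ℝ) : ∑ i, kron i j * D i = D j := by
  simp [kron]

lemma gdelta_comm (j i : Fin m → Fin n) : gdelta j i = gdelta i j := by
  rw [gdelta, ← Matrix.det_transpose]
  congr 1
  ext a b
  simp [kron_comm]

lemma gdelta_comp_perm_left (σ : Equiv.Perm (Fin m)) (j i : Fin m → Fin n) :
    gdelta (j ∘ σ) i = σ.sign * gdelta j i :=
  Matrix.det_permute σ (Matrix.of fun a b => kron (j a) (i b))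

lemma gdelta_comp_perm_right (σ : Equiv.Perm (Fin m)) (j i : Fin m → Fin n) :
    gdelta j (i ∘ σ) = σ.sign * gdelta j i := by
  rw [gdelta_comm, gdelta_comp_perm_left, gdelta_comm]

lemma gdelta_cons_left (x : Fin n) (j : Fin m → Fin n) (i : Fin (m + 1) → Fin n) :
    gdelta (Fin.cons x j) i =
      ∑ b : Fin (m + 1), (-1) ^ (b : ℕ) * kron x (i b) * gdelta j (i ∘ b.succAbove) :=
  Matrix.det_succ_row_zero _

lemma cons_comp_succ_succAbove {α : Type*} (i : Fin m → α) (c : Fin m) :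
    Fin.cons (i c) i ∘ c.succ.succAbove = i ∘ c.cycleRange.symm := by
  ext j
  obtain ⟨t, rfl⟩ := c.cycleRange.surjective j
  rw [Function.comp_apply, Fin.succAbove_cycleRange, Function.comp_apply,
    Equiv.symm_apply_apply, Equiv.swap_apply_def]
  split_ifs with h0 h1
  · exact absurd h0 (Fin.succ_ne_zero t)
  · rw [Fin.cons_zero, Fin.succ_injective _ h1]
  · rw [Fin.cons_succ]

lemma gdelta_cons_self_comp_succ_succAbove (j i : Fin m → Fin n) (c : Fin m) :
    gdelta j (Fin.cons (i c) i ∘ c.succ.succAbove) = (-1) ^ (c : ℕ) * gdelta j i := by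
  rw [cons_comp_succ_succAbove, gdelta_comp_perm_right, Equiv.Perm.sign_symm,
    Fin.sign_cycleRange]
  push_cast
  rfl

theorem sum_gdelta_cons_cons (j i : Fin m → Fin n) :
    ∑ x, gdelta (Fin.cons x j) (Fin.cons x i) = ((n : ℝ) - m) * gdelta j i := by
  have expand : ∀ x, gdelta (Fin.cons x j) (Fin.cons x i) = gdelta j i +
      ∑ c : Fin m, (-1) ^ ((c : ℕ) + 1) * kron x (i c) *
        gdelta j (Fin.cons x i ∘ c.succ.succAbove) := by
    intro x
    rw [gdelta_cons_left, Fin.sum_univ_succ]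
    simp [kron]
  have minor : ∀ c : Fin m, ∑ x, (-1) ^ ((c : ℕ) + 1) * kron x (i c) *
      gdelta j (Fin.cons x i ∘ c.succ.succAbove) = - gdelta j i := by
    intro c
    calc _ = ∑ x, kron x (i c) *
          ((-1) ^ ((c : ℕ) + 1) * gdelta j (Fin.cons x i ∘ c.succ.succAbove)) :=
          sum_congr rfl fun x _ => by ring
      _ = (-1) ^ ((c : ℕ) + 1 + c) * gdelta j i := by
          rw [sum_kron_mul, gdelta_cons_self_comp_succ_succAbove, ← mul_assoc, ← pow_add]
      _ = - gdelta j i := by rw [Odd.neg_one_pow ⟨c, by ring⟩, neg_one_mul]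
  rw [sum_congr rfl fun x _ => expand x, sum_add_distrib, sum_comm,
    sum_congr rfl fun c _ => minor c]
  simp only [sum_const, card_univ, Fintype.card_fin, nsmul_eq_mul]
  ring

theorem sum_gdelta_mul_cyclic_eq_zero (T : Fin n → Fin n → Fin n → ℝ)
    (hT : ∀ a b c, T a b c + T b c a + T c a b = 0) (i : Fin m → Fin n)
    (P : (Fin m → Fin n) → ℝ) {p q r : Fin m} (hpq : p ≠ q) (hqr : q ≠ r) (hpr : p ≠ r)
    (hP : ∀ f g : Fin m → Fin n,
      (∀ t, t ≠ p → t ≠ q → t ≠ r → f t = g t) → P f = P g) :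
    ∑ f, gdelta f i * (T (f p) (f q) (f r) * P f) = 0 := by
  set σ := Equiv.swap p q * Equiv.swap q r
  have hσp : σ p = q := by simp [σ, Equiv.swap_apply_of_ne_of_ne hpq hpr]
  have hσq : σ q = r := by simp [σ, Equiv.swap_apply_of_ne_of_ne hpr.symm hqr.symm]
  have hσr : σ r = p := by simp [σ]
  have hσ_sign : σ.sign = 1 := by simp [σ, hpq, hqr]
  have hPσ : ∀ f, P (f ∘ σ) = P f := fun f => hP _ _ fun t htp htq htr => by
    simp [σ, Equiv.swap_apply_of_ne_of_ne htq htr, Equiv.swap_apply_of_ne_of_ne htp htq]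
  have rotate : ∀ U : Fin n → Fin n → Fin n → ℝ,
      ∑ f, gdelta f i * (U (f p) (f q) (f r) * P f) =
        ∑ f, gdelta f i * (U (f q) (f r) (f p) * P f) := fun U => by
    rw [← sum_comp_perm σ]
    simp [gdelta_comp_perm_left, hσ_sign, hσp, hσq, hσr, hPσ]
  have cyclic_sum : ∑ f, gdelta f i * (T (f p) (f q) (f r) * P f) +
      ∑ f, gdelta f i * (T (f q) (f r) (f p) * P f) +
        ∑ f, gdelta f i * (T (f r) (f p) (f q) * P f) = 0 := by
    rw [← sum_add_distrib, ← sum_add_distrib]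
    exact sum_eq_zero fun f _ => by linear_combination gdelta f i * P f * hT (f p) (f q) (f r)
  linarith [rotate T, rotate fun a b c => T b c a]

end GeneralizedKronecker

section Lovelock

variable {n k : ℕ}

lemma d0_ne_d1 (a b : Fin k) : d0 a ≠ d1 b := fun h => by
  have := congrArg Fin.val h
  simp only [d0, d1] at this
  omega

lemma d0_injective : Function.Injective (d0 (k := k)) := fun a b h => by
  have := congrArg Fin.val h
  simp only [d0] at this
  omega

lemma d1_injective : Function.Injective (d1 (k := k)) := fun a b h => by
  have := congrArg Fin.val h
  simp only [d1] at this
  omega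

theorem lovelock_comm {R : Fin n → Fin n → Fin n → Fin n → ℝ}
    (hR : ∀ a b c d, R a b c d = R c d a b) (i j : Fin n) :
    lovelock (k := k) R i j = lovelock (k := k) R j i := by
  rw [lovelock, lovelock, sum_comm]
  refine congrArg _ (sum_congr rfl fun is _ => sum_congr rfl fun js _ => ?_)
  rw [gdelta_comm]
  exact congrArg _ (prod_congr rfl fun a _ => hR _ _ _ _)

theorem sum_lovelock_self (R : Fin n → Fin n → Fin n → Fin n → ℝ) :
    ∑ i, lovelock (k := k) R i i = ((n : ℝ) - 2 * k) * PfA (k := k) R := by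
  have trace : ∀ js is : Fin (2 * k) → Fin n,
      ∑ i, gdelta (Fin.cons i js) (Fin.cons i is) = ((n : ℝ) - 2 * k) * gdelta js is := by
    intro js is
    rw [sum_gdelta_cons_cons]
    push_cast
    rfl
  simp only [lovelock, PfA, ← mul_sum]
  rw [sum_comm, mul_left_comm, mul_sum (s := univ) (a := (n : ℝ) - 2 * k)]
  refine congrArg _ (sum_congr rfl fun js _ => ?_)
  rw [sum_comm, mul_sum]
  refine sum_congr rfl fun is _ => ?_
  rw [← sum_mul, trace, mul_assoc]

theorem sum_Dlovelock_self_eq_zero (R : Fin n → Fin n → Fin n → Fin n → ℝ)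
    {DR : Fin n → Fin n → Fin n → Fin n → Fin n → ℝ}
    (hDR : ∀ a b c l m, DR a b c l m + DR b c a l m + DR c a b l m = 0) (i : Fin n) :
    ∑ j, Dlovelock (k := k) R DR j i j = 0 := by
  have key : ∀ (is : Fin (2 * k) → Fin n) (w : Fin k),
      ∑ f : Fin (2 * k + 1) → Fin n, gdelta f (Fin.cons i is) *
        (DR (f 0) (f (d0 w).succ) (f (d1 w).succ) (is (d0 w)) (is (d1 w)) *
          ∏ b ∈ univ.erase w, R (f (d0 b).succ) (f (d1 b).succ) (is (d0 b)) (is (d1 b))) = 0 :=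
    fun is w => sum_gdelta_mul_cyclic_eq_zero _ (fun a b c => hDR a b c _ _) _ _
      (Fin.succ_ne_zero _).symm (by simpa using d0_ne_d1 w w)
      (Fin.succ_ne_zero _).symm fun f g hfg => prod_congr rfl fun b hb => by
        have hbw := (mem_erase.mp hb).1
        rw [hfg (d0 b).succ (Fin.succ_ne_zero _) (by simpa using d0_injective.ne hbw)
            (by simpa using d0_ne_d1 b w),
          hfg (d1 b).succ (Fin.succ_ne_zero _) (by simpa using (d0_ne_d1 w b).symm)
            (by simpa using d1_injective.ne hbw)]
  calc ∑ j, Dlovelock (k := k) R DR j i j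
      = (1 / (Nat.factorial k : ℝ)) * ∑ f : Fin (2 * k + 1) → Fin n, ∑ is, ∑ w : Fin k,
          gdelta f (Fin.cons i is) *
            (DR (f 0) (f (d0 w).succ) (f (d1 w).succ) (is (d0 w)) (is (d1 w)) *
              ∏ b ∈ univ.erase w,
                R (f (d0 b).succ) (f (d1 b).succ) (is (d0 b)) (is (d1 b))) := by
        simp only [Dlovelock, sum_fun_fin_succ, Fin.cons_zero, Fin.cons_succ, mul_sum]
    _ = 0 := by
        rw [sum_comm]
        refine mul_eq_zero_of_right _ (sum_eq_zero fun is _ => ?_)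
        rw [sum_comm]
        exact sum_eq_zero fun w _ => key is w

end Lovelock

theorem lovelock_properties_general (n k : ℕ)
    (R : Fin n → Fin n → Fin n → Fin n → ℝ)
    (hR3 : ∀ a b c d, R a b c d = R c d a b)
    (DR : Fin n → Fin n → Fin n → Fin n → Fin n → ℝ)
    (hBianchi2 : ∀ a b c l m, DR a b c l m + DR b c a l m + DR c a b l m = 0) :
    (∀ i j, lovelock (k := k) R i j = lovelock (k := k) R j i)
    ∧ (∀ i, ∑ j, Dlovelock (k := k) R DR j i j = 0)
    ∧ (∑ i, lovelock (k := k) R i i = ((n : ℝ) - 2 * (k : ℝ)) * PfA (k := k) R) :=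
  ⟨lovelock_comm hR3, sum_Dlovelock_self_eq_zero R hBianchi2, sum_lovelock_self R⟩

/-- on an `n`-dimensional pseudo-Riemannian manifold (pointwise in an
orthonormal frame), given the Riemann tensor `R` (with its algebraic symmetries)
and `DR = ∇R` satisfying the second Bianchi identity, the Lovelock tensor `E^{(k)}`
is symmetric, divergence-free, and has trace `(n − 2k) Pf^{(k)}(Rm)`. -/
theorem lovelock_properties (n k : ℕ)
    (R : Fin n → Fin n → Fin n → Fin n → ℝ)
    (hR1 : ∀ a b c d, R a b c d = - R b a c d)
    (hR2 : ∀ a b c d, R a b c d = - R a b d c)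
    (hR3 : ∀ a b c d, R a b c d = R c d a b)
    (hRB : ∀ a b c d, R a b c d + R b c a d + R c a b d = 0)
    (DR : Fin n → Fin n → Fin n → Fin n → Fin n → ℝ)
    (hDR1 : ∀ e a b c d, DR e a b c d = - DR e b a c d)
    (hDR2 : ∀ e a b c d, DR e a b c d = - DR e a b d c)
    (hDR3 : ∀ e a b c d, DR e a b c d = DR e c d a b)
    (hBianchi2 : ∀ a b c l m, DR a b c l m + DR b c a l m + DR c a b l m = 0) :
    (∀ i j, lovelock (k := k) R i j = lovelock (k := k) R j i)
    ∧ (∀ i, ∑ j, Dlovelock (k := k) R DR j i j = 0)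
    ∧ (∑ i, lovelock (k := k) R i i = ((n : ℝ) - 2 * (k : ℝ)) * PfA (k := k) R) :=
  lovelock_properties_general n k R hR3 DR hBianchi2
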